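/- arXiv:2205.04184 — 3 statements merged into one kernel-verified Lean document; each statement's English description precedes it below -/
import Mathlib

section
/- Let n = 2 and s ≥ 5, suppose L = L_{2,d}(m_1,…,m_s) ≠ 0 and m_i ≥ 0 for all i. Fix 1 ≤ j_1 < j_2 ≤ s, set k := max(m_{j_1} + m_{j_2} − d, 0), d' := d − k, m'_{j_1} := m_{j_1} − k, m'_{j_2} := m_{j_2} − k, and m'_i := m_i for i ∉ {j_1, j_2}, and let L' := L_{2,d'}(m'_1,…,m'_s). Then: L' ≠ 0; m'_i ≥ 0 for all i; max(m'_{j_1} + m'_{j_2} − d', 0) = 0; max(m'_{i_1} + m'_{i_2} − d', 0) = max(m_{i_1} + m_{i_2} − d, 0) for every pair {i_1, i_2} ≠ {j_1, j_2}; k_C(d', m') = k_C(d, m); and G(d', m') = G(d, m). -/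
open Finset

noncomputable section

/-- Binomial coefficient `C(a,k)` with integer arguments; zero if `k < 0` or `a < k`. -/
def Cb (a k : ℤ) : ℤ := if 0 ≤ k ∧ k ≤ a then (Nat.choose a.toNat k.toNat : ℤ) else 0

/-- Iterated partial derivative along a list of coordinate directions, as a linear map. -/
def derivAlong {n : ℕ} (D : List (Fin (n+1))) :
    MvPolynomial (Fin (n+1)) ℂ →ₗ[ℂ] MvPolynomial (Fin (n+1)) ℂ :=
  D.foldr (fun j f => (MvPolynomial.pderiv j).toLinearMap.comp f) LinearMap.id

/-- The point `(1, u, u², …, uⁿ) ∈ ℂ^{n+1}` on the affine cone over the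
rational normal curve of degree `n`. -/
def rncPoint (n : ℕ) (u : ℂ) : Fin (n+1) → ℂ := fun j => u ^ (j : ℕ)

/-- The linear system `L_{n,d}(m_1,…,m_s)` with integer degree and multiplicities:
homogeneous polynomials of degree `d` in `x_0,…,x_n` all of whose partial derivatives
of total order `≤ m_i − 1` vanish at `p_i = (1, t_i, …, t_iⁿ)`; it is zero if `d < 0`. -/
def linSysZ (n : ℕ) (d : ℤ) (s : ℕ) (m : Fin s → ℤ) (tp : Fin s → ℂ) :
    Submodule ℂ (MvPolynomial (Fin (n+1)) ℂ) :=
  if 0 ≤ d then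
    MvPolynomial.homogeneousSubmodule (Fin (n+1)) ℂ d.toNat ⊓
      ⨅ (i : Fin s), ⨅ (D : List (Fin (n+1))), ⨅ (_ : (D.length : ℤ) < m i),
        LinearMap.ker
          ((MvPolynomial.aeval (rncPoint n (tp i))).toLinearMap.comp (derivAlong D))
  else ⊥

/-- `k_C(d,m) = ⌈(m_1+⋯+m_s − 2d)/(s−4)⌉` (planar case `n = 2`). -/
def kC2 (d : ℤ) (s : ℕ) (m : Fin s → ℤ) : ℤ :=
  ⌈((∑ i, (m i : ℚ)) - 2 * (d : ℚ)) / ((s : ℚ) - 4)⌉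

/-- The exceeding number `ε(d,m)`, i.e. the unique `ε ∈ {0,…,s−5}` with
`k_C = (Σ mᵢ − 2d + ε)/(s−4)` (planar case `n = 2`). -/
def eps2 (d : ℤ) (s : ℕ) (m : Fin s → ℤ) : ℤ :=
  ((s : ℤ) - 4) * kC2 d s m - ((∑ i, m i) - 2 * d)

/-- The function `G(d,m)` computing the dimension of planar systems with base points on
a conic. -/
def G2 (d : ℤ) (s : ℕ) (m : Fin s → ℤ) : ℤ :=
  Cb (d + 2) 2 - ∑ i, Cb (m i + 1) 2
    + ∑ p ∈ Finset.univ.filter (fun p : Fin s × Fin s => p.1 < p.2),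
        Cb (m p.1 + m p.2 - d) 2
    + Cb (kC2 d s m) 2 + ((s : ℤ) - 5) * Cb (kC2 d s m + 1) 2
    - eps2 d s m * Cb (kC2 d s m) 1

/-!
The order of vanishing `ord_p P` of a polynomial at a point `p` is the order of the power series
`P(X + p)`. It is additive on products, and by Taylor's formula `m ≤ ord_p P` says exactly that
the derivatives of order `< m` in the definition of `L` vanish at `p`.

Restricted to the line through two points where it vanishes to orders `a` and `b`, a form of
degree `e` becomes a polynomial in one variable divisible by `Tᵃ (T - 1)ᵇ`. If `a + b > e` it
vanishes on that line, hence is divisible by its equation. For the points `p_{j₁}, p_{j₂}` of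
the conic this splits `k` copies of the secant off a nonzero `P ∈ L`, and the cofactor lies in
`L'`. One point alone gives `mᵢ ≤ d`, so `m' ≥ 0`. Splitting off secants through two disjoint
pairs gives `m_{i₁} + m_{i₂} + m_{j₁} + m_{j₂} ≤ 2d`, which is why the other `k_{i₁i₂}⁺` do not
change.
Since `Σ mᵢ - 2d` is unchanged, so are `k_C` and `ε`, and `G` is preserved by a binomial
identity.
-/

namespace Polynomial

theorem eq_zero_of_pow_dvd_of_pow_dvd {K : Type*} [Field K] {f : K[X]} {u w : K} (huw : u ≠ w)
    {a b : ℕ} (ha : (X - C u) ^ a ∣ f) (hb : (X - C w) ^ b ∣ f) (hf : f.natDegree < a + b) :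
    f = 0 := by
  refine eq_zero_of_dvd_of_natDegree_lt
    (((isCoprime_X_sub_C_of_isUnit_sub (sub_ne_zero.mpr huw).isUnit).pow).mul_dvd ha hb) ?_
  rwa [((monic_X_sub_C u).pow a).natDegree_mul ((monic_X_sub_C w).pow b), natDegree_pow,
    natDegree_pow, natDegree_X_sub_C, natDegree_X_sub_C, mul_one, mul_one]

end Polynomial

open MvPolynomial

namespace MvPolynomial

section CommRing

variable {σ R S : Type*} [CommRing R] [CommRing S] [Algebra R S]

theorem IsHomogeneous.eval_smul {F : MvPolynomial σ R} {n : ℕ} (hF : F.IsHomogeneous n)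
    (c : R) (x : σ → R) : eval (c • x) F = c ^ n * eval x F := by
  conv_lhs => rw [F.as_sum]
  conv_rhs => rw [F.as_sum]
  simp only [map_sum, Finset.mul_sum, eval_monomial]
  refine Finset.sum_congr rfl fun α hα => ?_
  have hdeg : α.degree = n := by
    rw [Finsupp.degree_eq_weight_one]; exact hF (mem_support_iff.mp hα)
  simp only [Pi.smul_apply, smul_eq_mul, mul_pow, ← hdeg, Finsupp.degree_apply, Finsupp.prod,
    Finset.prod_mul_distrib, Finset.prod_pow_eq_pow_sum]
  ring

theorem dvd_sub_aeval {g : MvPolynomial σ R} {y : σ → MvPolynomial σ R}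
    (hy : ∀ i, g ∣ X i - y i) (F : MvPolynomial σ R) : g ∣ F - aeval y F := by
  induction F using MvPolynomial.induction_on with
  | C a => simp
  | add F G hF hG => simpa [add_sub_add_comm] using dvd_add hF hG
  | mul_X F i hF =>
    rw [map_mul, aeval_X, show F * X i - aeval y F * y i
      = (F - aeval y F) * X i + aeval y F * (X i - y i) by ring]
    exact dvd_add (dvd_mul_of_dvd_left hF _) (dvd_mul_of_dvd_right (hy i) _)

theorem pow_dvd_aeval_mul {G : MvPolynomial σ R} {a : ℕ}
    (hG : ∀ α : σ →₀ ℕ, α.degree < a → coeff α G = 0) (v : σ → R) (r : S) :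
    r ^ a ∣ aeval (fun i => algebraMap R S (v i) * r) G := by
  rw [G.as_sum, map_sum]
  refine Finset.dvd_sum fun α hα => ?_
  have ha : a ≤ α.degree := not_lt.mp fun h => mem_support_iff.mp hα (hG α h)
  rw [aeval_monomial, Finsupp.prod]
  simp only [mul_pow, Finset.prod_mul_distrib, Finset.prod_pow_eq_pow_sum, ← Finsupp.degree_apply]
  exact Dvd.dvd.mul_left (Dvd.dvd.mul_left (pow_dvd_pow r ha) _) _

theorem natDegree_aeval_linear_le (P : MvPolynomial σ R) (x v : σ → R) :
    (aeval (fun i => Polynomial.C (x i) + Polynomial.C (v i) * Polynomial.X) P).natDegree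
      ≤ P.totalDegree := by
  conv_lhs => rw [P.as_sum]
  rw [map_sum]
  refine Polynomial.natDegree_sum_le_of_forall_le _ _ fun α hα => ?_
  rw [aeval_monomial, Finsupp.prod, Polynomial.algebraMap_eq]
  refine (Polynomial.natDegree_C_mul_le _ _).trans ((Polynomial.natDegree_prod_le _ _).trans ?_)
  have hlin : ∀ i, (Polynomial.C (x i) + Polynomial.C (v i) * Polynomial.X).natDegree ≤ 1 :=
    fun i => by rw [add_comm]; exact Polynomial.natDegree_linear_le
  refine (Finset.sum_le_sum fun i _ => Polynomial.natDegree_pow_le_of_le (α i) (hlin i)).trans ?_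
  simpa [Finsupp.sum] using le_totalDegree hα

def translate (p : σ → R) : MvPolynomial σ R →ₐ[R] MvPolynomial σ R :=
  aeval fun i => X i + C (p i)

theorem aeval_translate (g : σ → S) (p : σ → R) (P : MvPolynomial σ R) :
    aeval g (translate p P) = aeval (fun i => g i + algebraMap R S (p i)) P := by
  rw [translate, comp_aeval_apply]
  simp

theorem constantCoeff_translate (p : σ → R) (P : MvPolynomial σ R) :
    constantCoeff (translate p P) = aeval p P := by
  rw [← Algebra.algebraMap_self_apply (constantCoeff _), ← aeval_zero', aeval_translate]
  simp

theorem pderiv_translate (p : σ → R) (j : σ) (P : MvPolynomial σ R) :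
    pderiv j (translate p P) = translate p (pderiv j P) := by
  classical
  induction P using MvPolynomial.induction_on with
  | C a => simp [translate]
  | add P Q hP hQ => simp [hP, hQ]
  | mul_X P i hP =>
    have hX : translate p (X i) = X i + C (p i) := aeval_X _ _
    by_cases hij : i = j
    · subst hij; simp [hP, hX]
    · simp [hP, hX, pderiv_X_of_ne hij]

def vanishingOrder (p : σ → R) (P : MvPolynomial σ R) : ℕ∞ :=
  (translate p P : MvPowerSeries σ R).order

theorem le_vanishingOrder_iff {p : σ → R} {P : MvPolynomial σ R} {m : ℕ} :
    (m : ℕ∞) ≤ vanishingOrder p P ↔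
      ∀ α : σ →₀ ℕ, α.degree < m → coeff α (translate p P) = 0 := by
  refine ⟨fun h α hα => ?_, fun h => MvPowerSeries.nat_le_order fun α hα => ?_⟩
  · rw [← coeff_coe]
    exact MvPowerSeries.coeff_of_lt_order ((Nat.cast_lt.mpr hα).trans_le h)
  · rw [coeff_coe]
    exact h α hα

theorem vanishingOrder_mul [IsDomain R] (p : σ → R) (P Q : MvPolynomial σ R) :
    vanishingOrder p (P * Q) = vanishingOrder p P + vanishingOrder p Q := by
  simp only [vanishingOrder, map_mul, coe_mul, MvPowerSeries.order_mul]

theorem vanishingOrder_eq_zero {p : σ → R} {P : MvPolynomial σ R} (h : aeval p P ≠ 0) :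
    vanishingOrder p P = 0 := by
  refine nonpos_iff_eq_zero.mp (MvPowerSeries.order_le (d := 0) ?_)
  rwa [coeff_coe, ← constantCoeff_eq, constantCoeff_translate]

theorem pow_dvd_aeval_line {p : σ → R} {P : MvPolynomial σ R} {a : ℕ}
    (ha : (a : ℕ∞) ≤ vanishingOrder p P) (v : σ → R) (u : R) :
    (Polynomial.X - Polynomial.C u) ^ a ∣
      aeval (fun i => Polynomial.C (p i) + Polynomial.C (v i) * (Polynomial.X - Polynomial.C u))
        P := by
  have h := pow_dvd_aeval_mul (le_vanishingOrder_iff.mp ha) v (Polynomial.X - Polynomial.C u)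
  rw [aeval_translate] at h
  have hline : (fun i => algebraMap R (Polynomial R) (v i) * (Polynomial.X - Polynomial.C u)
      + algebraMap R (Polynomial R) (p i))
      = fun i => Polynomial.C (p i) + Polynomial.C (v i) * (Polynomial.X - Polynomial.C u) := by
    funext i
    rw [Polynomial.algebraMap_eq]
    ring
  rwa [hline] at h

end CommRing

attribute [local instance] MvPolynomial.gradedAlgebra in
theorem IsHomogeneous.of_mul_left {σ K : Type*} [CommRing K] [IsDomain K]
    {ℓ Q : MvPolynomial σ K} {a n : ℕ} (hℓ : ℓ.IsHomogeneous a)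
    (hℓ0 : ℓ ≠ 0) (h : (ℓ * Q).IsHomogeneous n) : Q.IsHomogeneous (n - a) := by
  have hmem : ℓ ∈ homogeneousSubmodule σ K a := (mem_homogeneousSubmodule a ℓ).mpr hℓ
  have hcomp : ∀ (P : MvPolynomial σ K) m,
      (DirectSum.decompose (homogeneousSubmodule σ K) P m : MvPolynomial σ K)
      = homogeneousComponent m P := decomposition.decompose'_apply
  by_cases han : a ≤ n
  · suffices ℓ * homogeneousComponent (n - a) Q = ℓ * Q by
      rw [← mul_left_cancel₀ hℓ0 this]
      exact homogeneousComponent_isHomogeneous _ _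
    rw [← hcomp, ← DirectSum.coe_decompose_mul_of_left_mem_of_le _ hmem han, hcomp]
    exact homogeneousComponent_eq_self h
  · have := DirectSum.coe_decompose_mul_of_left_mem_of_not_le (homogeneousSubmodule σ K)
      (b := Q) hmem han
    rw [hcomp, homogeneousComponent_eq_self h, mul_eq_zero] at this
    rw [this.resolve_left hℓ0]
    exact isHomogeneous_zero _ _ _

section Field

variable {σ K : Type*} [Field K]

theorem aeval_lineMap_eq_zero {p q : σ → K} {P : MvPolynomial σ K} {a b : ℕ}
    (ha : (a : ℕ∞) ≤ vanishingOrder p P) (hb : (b : ℕ∞) ≤ vanishingOrder q P)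
    (hP : P.totalDegree < a + b) (T : K) : aeval (AffineMap.lineMap p q T) P = 0 := by
  set f := aeval (fun i => Polynomial.C (p i) + Polynomial.C ((q - p) i) * Polynomial.X) P
  have hfa : (Polynomial.X - Polynomial.C 0) ^ a ∣ f := by
    simpa [f] using pow_dvd_aeval_line ha (q - p) 0
  have hfb : (Polynomial.X - Polynomial.C 1) ^ b ∣ f := by
    have hline : (fun i => Polynomial.C (p i) + Polynomial.C ((q - p) i) * Polynomial.X)
        = fun i =>
          Polynomial.C (q i) + Polynomial.C ((q - p) i) * (Polynomial.X - Polynomial.C 1) := by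
      funext i
      simp only [Pi.sub_apply, map_sub, map_one]
      ring
    rw [show f = _ from congrArg (aeval · P) hline]
    exact pow_dvd_aeval_line hb (q - p) 1
  have hf : f = 0 := Polynomial.eq_zero_of_pow_dvd_of_pow_dvd zero_ne_one hfa hfb
    ((natDegree_aeval_linear_le P p (q - p)).trans_lt hP)
  have := congrArg (Polynomial.aeval T) hf
  rw [comp_aeval_apply, map_zero] at this
  convert this using 3
  funext i
  simp only [AffineMap.lineMap_apply_module', Pi.add_apply, Pi.smul_apply, Pi.sub_apply,
    smul_eq_mul, Polynomial.coe_aeval_eq_eval, Polynomial.eval_add, Polynomial.eval_mul,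
    Polynomial.eval_C, Polynomial.eval_X]
  ring

variable [Infinite K]

theorem vanishingOrder_le_totalDegree {p : σ → K} {P : MvPolynomial σ K}
    (hP : P ≠ 0) : vanishingOrder p P ≤ P.totalDegree := by
  by_contra h
  refine hP (MvPolynomial.funext fun x => ?_)
  have := aeval_lineMap_eq_zero (q := x) (b := 0) (Order.add_one_le_of_lt (not_le.mp h))
    (by simp) (by simp) 1
  simpa using this

theorem vanishingOrder_mul_le (p : σ → K) {L : MvPolynomial σ K} (hL : L ≠ 0)
    (Q : MvPolynomial σ K) : vanishingOrder p (L * Q) ≤ L.totalDegree + vanishingOrder p Q := by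
  rw [vanishingOrder_mul]
  gcongr
  exact vanishingOrder_le_totalDegree hL

theorem le_vanishingOrder_of_le_mul {p : σ → K} {L Q : MvPolynomial σ K} (hL : L ≠ 0)
    {a c : ℕ} (hLc : L.totalDegree ≤ c) (ha : (a : ℕ∞) ≤ vanishingOrder p (L * Q)) :
    ((a - c : ℕ) : ℕ∞) ≤ vanishingOrder p Q := by
  rw [ENat.natCast_sub, tsub_le_iff_left]
  refine ha.trans ((vanishingOrder_mul_le p hL Q).trans ?_)
  gcongr

theorem le_of_le_vanishingOrder {p : σ → K} {P : MvPolynomial σ K} (hP : P ≠ 0)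
    {d a : ℕ} (hd : P.IsHomogeneous d) (ha : (a : ℕ∞) ≤ vanishingOrder p P) : a ≤ d := by
  exact_mod_cast ha.trans ((vanishingOrder_le_totalDegree hP).trans
    (Nat.cast_le.mpr hd.totalDegree_le))

end Field

end MvPolynomial

section LinearSystem

variable {n : ℕ}

theorem derivAlong_cons (j : Fin (n+1)) (D : List (Fin (n+1))) (P : MvPolynomial (Fin (n+1)) ℂ) :
    derivAlong (j :: D) P = pderiv j (derivAlong D P) := rfl

theorem derivAlong_translate (p : Fin (n+1) → ℂ) (D : List (Fin (n+1)))
    (P : MvPolynomial (Fin (n+1)) ℂ) :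
    derivAlong D (translate p P) = translate p (derivAlong D P) := by
  induction D with
  | nil => rfl
  | cons j D ih => rw [derivAlong_cons, derivAlong_cons, ih, pderiv_translate]

theorem exists_coeff_derivAlong (D : List (Fin (n+1))) (β : Fin (n+1) →₀ ℕ) :
    ∃ c : ℕ, c ≠ 0 ∧
      ∀ P, coeff β (derivAlong D P) = c * coeff (β + Multiset.toFinsupp D) P := by
  induction D generalizing β with
  | nil => exact ⟨1, one_ne_zero, fun P => by simp [derivAlong]⟩
  | cons j D ih =>
    obtain ⟨c, hc, h⟩ := ih (β + Finsupp.single j 1)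
    refine ⟨c * (β j + 1), by positivity, fun P => ?_⟩
    rw [derivAlong_cons, coeff_pderiv, h, ← Multiset.cons_coe, ← Multiset.singleton_add,
      Multiset.toFinsupp_add, Multiset.toFinsupp_singleton, add_assoc]
    push_cast
    ring

theorem exists_aeval_derivAlong (p : Fin (n+1) → ℂ) (D : List (Fin (n+1))) :
    ∃ c : ℕ, c ≠ 0 ∧
      ∀ P, aeval p (derivAlong D P) = c * coeff (Multiset.toFinsupp D) (translate p P) := by
  obtain ⟨c, hc, h⟩ := exists_coeff_derivAlong D 0
  refine ⟨c, hc, fun P => ?_⟩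
  rw [← constantCoeff_translate, ← derivAlong_translate, constantCoeff_eq, h, zero_add]

theorem forall_aeval_derivAlong_eq_zero_iff (p : Fin (n+1) → ℂ)
    (P : MvPolynomial (Fin (n+1)) ℂ) (m : ℕ) :
    (∀ D : List (Fin (n+1)), D.length < m → aeval p (derivAlong D P) = 0) ↔
      (m : ℕ∞) ≤ vanishingOrder p P := by
  rw [le_vanishingOrder_iff]
  constructor
  · intro h α hα
    obtain ⟨c, hc, hD⟩ := exists_aeval_derivAlong p (Finsupp.toMultiset α).toList
    have hlen : (Finsupp.toMultiset α).toList.length = α.degree := by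
      rw [Multiset.length_toList, Finsupp.card_toMultiset]; rfl
    have := h _ (hlen ▸ hα)
    rw [hD, Multiset.coe_toList, Finsupp.toMultiset_toFinsupp] at this
    exact (mul_eq_zero.mp this).resolve_left (Nat.cast_ne_zero.mpr hc)
  · intro h D hD
    obtain ⟨c, -, hD'⟩ := exists_aeval_derivAlong p D
    have hdeg : (Multiset.toFinsupp (D : Multiset (Fin (n+1)))).degree = D.length := by
      rw [Finsupp.degree, ← Multiset.coe_card, ← Multiset.toFinsupp_sum_eq]; rfl
    rw [hD', h _ (hdeg ▸ hD), mul_zero]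

theorem mem_linSysZ_iff {d : ℤ} (hd : 0 ≤ d) {s : ℕ} (m : Fin s → ℤ) (tp : Fin s → ℂ)
    (P : MvPolynomial (Fin (n+1)) ℂ) :
    P ∈ linSysZ n d s m tp ↔ P.IsHomogeneous d.toNat ∧
      ∀ i, ((m i).toNat : ℕ∞) ≤ vanishingOrder (rncPoint n (tp i)) P := by
  simp only [linSysZ, if_pos hd, Submodule.mem_inf, mem_homogeneousSubmodule, Submodule.mem_iInf,
    LinearMap.mem_ker, LinearMap.coe_comp, Function.comp_apply, AlgHom.toLinearMap_apply,
    ← forall_aeval_derivAlong_eq_zero_iff, Int.lt_toNat]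

theorem exists_ne_zero_of_linSysZ_ne_bot {n d s : ℕ} {m : Fin s → ℕ} {tp : Fin s → ℂ}
    (h : linSysZ n d s (fun i => (m i : ℤ)) tp ≠ ⊥) :
    ∃ P, P ≠ 0 ∧ P.IsHomogeneous d ∧
      ∀ i, (m i : ℕ∞) ≤ vanishingOrder (rncPoint n (tp i)) P := by
  obtain ⟨P, hPmem, hP⟩ := Submodule.exists_mem_ne_zero_of_ne_bot h
  rw [mem_linSysZ_iff (Int.natCast_nonneg d)] at hPmem
  simpa using ⟨P, hP, hPmem⟩

end LinearSystem

section Secant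

def secant (t₁ t₂ : ℂ) : MvPolynomial (Fin 3) ℂ :=
  C (t₁ * t₂) * X 0 - C (t₁ + t₂) * X 1 + X 2

variable {t₁ t₂ : ℂ}

theorem aeval_rncPoint_secant (u : ℂ) :
    aeval (rncPoint 2 u) (secant t₁ t₂) = (u - t₁) * (u - t₂) := by
  simp only [secant, rncPoint, map_add, map_sub, map_mul, aeval_C, aeval_X,
    Algebra.algebraMap_self, RingHom.id_apply, Fin.coe_ofNat_eq_mod, Nat.reduceAdd, Nat.zero_mod,
    Nat.one_mod, Nat.mod_succ, pow_zero, pow_one]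
  ring

theorem secant_isHomogeneous : (secant t₁ t₂).IsHomogeneous 1 :=
  (((isHomogeneous_C_mul_X _ 0).sub (isHomogeneous_C_mul_X _ 1))).add (isHomogeneous_X ℂ 2)

theorem secant_ne_zero : secant t₁ t₂ ≠ 0 := fun h => by
  simpa [secant] using congrArg (aeval ![(0 : ℂ), 0, 1]) h

theorem secant_dvd_of_forall_lineMap (h12 : t₁ ≠ t₂) {F : MvPolynomial (Fin 3) ℂ} {e : ℕ}
    (hF : F.IsHomogeneous e)
    (h : ∀ T : ℂ, aeval (AffineMap.lineMap (rncPoint 2 t₁) (rncPoint 2 t₂) T) F = 0) :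
    secant t₁ t₂ ∣ F := by
  set y : Fin 3 → MvPolynomial (Fin 3) ℂ :=
    ![X 0, X 1, C (t₁ + t₂) * X 1 - C (t₁ * t₂) * X 0]
  have hy : ∀ i, secant t₁ t₂ ∣ X i - y i := by
    intro i
    fin_cases i
    · simp [y]
    · simp [y]
    · exact ⟨1, by simp only [y, secant, Fin.reduceFinMk, Matrix.cons_val]; ring⟩
  suffices hy0 : aeval y F = 0 by simpa only [hy0, sub_zero] using dvd_sub_aeval hy F
  refine funext_set ![{0}ᶜ, Set.univ, Set.univ] ?_ fun x hx => ?_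
  · intro i
    fin_cases i
    exacts [Set.Finite.infinite_compl (Set.finite_singleton 0), Set.infinite_univ,
      Set.infinite_univ]
  have hx0 : x 0 ≠ 0 := hx 0 (Set.mem_univ _)
  -- `(x₀, x₁, (t₁+t₂)x₁ - t₁t₂x₀)` lies on the secant, so it is `x₀` times a point of the chord
  have hpt : (fun i => eval x (y i)) = x 0 • AffineMap.lineMap (rncPoint 2 t₁) (rncPoint 2 t₂)
      ((x 1 / x 0 - t₁) / (t₂ - t₁)) := by
    have : t₂ - t₁ ≠ 0 := sub_ne_zero.mpr h12.symm
    funext i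
    fin_cases i <;>
      simp only [y, AffineMap.lineMap_apply_module', rncPoint, Fin.zero_eta, Fin.mk_one,
        Fin.reduceFinMk, Matrix.cons_val, Pi.add_apply, Pi.smul_apply, Pi.sub_apply, smul_eq_mul,
        map_add, map_sub, map_mul, eval_C, eval_X, Fin.coe_ofNat_eq_mod, Nat.reduceAdd,
        Nat.zero_mod, Nat.one_mod, Nat.mod_succ, pow_zero, pow_one] <;>
      field_simp <;> ring
  rw [map_zero, aeval_eq_bind₁, eval, eval₂Hom_bind₁]
  change eval (fun i => eval x (y i)) F = 0
  rw [hpt, hF.eval_smul]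
  exact mul_eq_zero_of_right _ (h _)

theorem secant_dvd (h12 : t₁ ≠ t₂) {F : MvPolynomial (Fin 3) ℂ} {e a b : ℕ}
    (hF : F.IsHomogeneous e) (ha : (a : ℕ∞) ≤ vanishingOrder (rncPoint 2 t₁) F)
    (hb : (b : ℕ∞) ≤ vanishingOrder (rncPoint 2 t₂) F) (hab : e < a + b) :
    secant t₁ t₂ ∣ F :=
  secant_dvd_of_forall_lineMap h12 hF
    (aeval_lineMap_eq_zero ha hb (hF.totalDegree_le.trans_lt hab))

theorem exists_secant_pow_mul (h12 : t₁ ≠ t₂) {P : MvPolynomial (Fin 3) ℂ} (hP : P ≠ 0)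
    {d a b : ℕ} (hd : P.IsHomogeneous d)
    (ha : (a : ℕ∞) ≤ vanishingOrder (rncPoint 2 t₁) P)
    (hb : (b : ℕ∞) ≤ vanishingOrder (rncPoint 2 t₂) P) {k : ℕ} (hk : k ≤ a + b - d) :
    ∃ Q, P = secant t₁ t₂ ^ k * Q ∧ Q ≠ 0 ∧ Q.IsHomogeneous (d - k) ∧
      ((a - k : ℕ) : ℕ∞) ≤ vanishingOrder (rncPoint 2 t₁) Q ∧
      ((b - k : ℕ) : ℕ∞) ≤ vanishingOrder (rncPoint 2 t₂) Q := by
  have had := le_of_le_vanishingOrder hP hd ha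
  have hbd := le_of_le_vanishingOrder hP hd hb
  induction k with
  | zero => exact ⟨P, by simp, hP, hd, by simpa using ha, by simpa using hb⟩
  | succ k ih =>
    obtain ⟨Q, rfl, hQ, hQd, hQa, hQb⟩ := ih (by omega)
    obtain ⟨Q', rfl⟩ := secant_dvd h12 hQd hQa hQb (by omega)
    have hs := secant_ne_zero (t₁ := t₁) (t₂ := t₂)
    have hsd : (secant t₁ t₂).totalDegree ≤ 1 := secant_isHomogeneous.totalDegree_le
    refine ⟨Q', by ring, right_ne_zero_of_mul hQ, ?_, ?_, ?_⟩
    · simpa [Nat.sub_sub] using secant_isHomogeneous.of_mul_left hs hQd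
    · simpa [Nat.sub_sub] using le_vanishingOrder_of_le_mul hs hsd hQa
    · simpa [Nat.sub_sub] using le_vanishingOrder_of_le_mul hs hsd hQb

theorem vanishingOrder_secant_pow_mul {u : ℂ} (hu₁ : u ≠ t₁) (hu₂ : u ≠ t₂) (k : ℕ)
    (Q : MvPolynomial (Fin 3) ℂ) :
    vanishingOrder (rncPoint 2 u) (secant t₁ t₂ ^ k * Q) = vanishingOrder (rncPoint 2 u) Q := by
  rw [vanishingOrder_mul, vanishingOrder_eq_zero, zero_add]
  rw [map_pow, aeval_rncPoint_secant]
  exact pow_ne_zero _ (mul_ne_zero (sub_ne_zero.mpr hu₁) (sub_ne_zero.mpr hu₂))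

/-- The secants through the two pairs are split off one at a time until each pair has
multiplicity sum at most the degree. -/
theorem add_add_add_le_of_vanishingOrder {t₁ t₂ t₃ t₄ : ℂ} (h12 : t₁ ≠ t₂)
    (h34 : t₃ ≠ t₄) (h13 : t₁ ≠ t₃) (h14 : t₁ ≠ t₄) (h23 : t₂ ≠ t₃) (h24 : t₂ ≠ t₄)
    {P : MvPolynomial (Fin 3) ℂ} (hP : P ≠ 0) {d : ℕ} (hd : P.IsHomogeneous d)
    {m₁ m₂ m₃ m₄ : ℕ}
    (hm₁ : (m₁ : ℕ∞) ≤ vanishingOrder (rncPoint 2 t₁) P)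
    (hm₂ : (m₂ : ℕ∞) ≤ vanishingOrder (rncPoint 2 t₂) P)
    (hm₃ : (m₃ : ℕ∞) ≤ vanishingOrder (rncPoint 2 t₃) P)
    (hm₄ : (m₄ : ℕ∞) ≤ vanishingOrder (rncPoint 2 t₄) P) :
    m₁ + m₂ + m₃ + m₄ ≤ 2 * d := by
  induction d using Nat.strong_induction_on
    generalizing P m₁ m₂ m₃ m₄ t₁ t₂ t₃ t₄ with
  | _ d ih =>
  wlog h : d < m₁ + m₂ generalizing P m₁ m₂ m₃ m₄ t₁ t₂ t₃ t₄
  · by_cases h' : d < m₃ + m₄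
    · linarith [this h34 h12 h13.symm h23.symm h14.symm h24.symm hP hd hm₃ hm₄ hm₁ hm₂ h']
    · omega
  obtain ⟨Q, rfl, hQ, hQd, hQ₁, hQ₂⟩ :=
    exists_secant_pow_mul h12 hP hd hm₁ hm₂ (k := 1) (by omega)
  have hd1 : 1 ≤ d := by
    have := le_of_le_vanishingOrder hP hd hm₁
    have := le_of_le_vanishingOrder hP hd hm₂
    omega
  rw [vanishingOrder_secant_pow_mul h13.symm h23.symm] at hm₃
  rw [vanishingOrder_secant_pow_mul h14.symm h24.symm] at hm₄
  have := ih (d - 1) (by omega) h12 h34 h13 h14 h23 h24 hQ hQd hQ₁ hQ₂ hm₃ hm₄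
  omega

end Secant

section Numerics

theorem Cb_two_of_le_one {x : ℤ} (h : x ≤ 1) : Cb x 2 = 0 := by
  rw [Cb, if_neg]
  omega

theorem two_mul_Cb_two {x : ℤ} (h : 0 ≤ x) : 2 * Cb x 2 = x * (x - 1) := by
  obtain ⟨n, rfl⟩ := Int.eq_ofNat_of_zero_le h
  rcases Nat.lt_or_ge n 2 with hn | hn
  · interval_cases n <;> simp [Cb]
  · rw [Cb, if_pos (by omega), Int.toNat_natCast, show (2 : ℤ).toNat = 2 from rfl,
      show (n : ℤ) - 1 = ((n - 1 : ℕ) : ℤ) by omega]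
    exact_mod_cast (Nat.choose_two_right n).symm ▸
      Nat.two_mul_div_two_of_even (Nat.even_mul_pred_self n)

theorem Cb_two_eq_of_max_eq {x y : ℤ} (h : max x 0 = max y 0) : Cb x 2 = Cb y 2 := by
  rcases le_or_gt x 1 with hx | hx
  · rw [Cb_two_of_le_one hx, Cb_two_of_le_one (by omega)]
  · rw [show x = y by omega]

theorem Cb_two_sub_line {d a b k : ℤ} (hk : k = max (a + b - d) 0) (ha : 0 ≤ a) (hb : 0 ≤ b)
    (had : a ≤ d) (hbd : b ≤ d) :
    Cb (d - k + 2) 2 - Cb (d + 2) 2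
      = Cb (a - k + 1) 2 - Cb (a + 1) 2 + (Cb (b - k + 1) 2 - Cb (b + 1) 2) + Cb (a + b - d) 2 := by
  rcases le_or_gt (a + b - d) 0 with h | h
  · obtain rfl : k = 0 := by omega
    simp [Cb_two_of_le_one (by omega : a + b - d ≤ 1)]
  · obtain rfl : k = a + b - d := by omega
    have e₁ := two_mul_Cb_two (x := d - (a + b - d) + 2) (by omega)
    have e₂ := two_mul_Cb_two (x := d + 2) (by omega)
    have e₃ := two_mul_Cb_two (x := a - (a + b - d) + 1) (by omega)
    have e₄ := two_mul_Cb_two (x := a + 1) (by omega)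
    have e₅ := two_mul_Cb_two (x := b - (a + b - d) + 1) (by omega)
    have e₆ := two_mul_Cb_two (x := b + 1) (by omega)
    have e₇ := two_mul_Cb_two (x := a + b - d) (by omega)
    have : 2 * (Cb (d - (a + b - d) + 2) 2 - Cb (d + 2) 2 - (Cb (a - (a + b - d) + 1) 2
        - Cb (a + 1) 2 + (Cb (b - (a + b - d) + 1) 2 - Cb (b + 1) 2) + Cb (a + b - d) 2)) = 0 := by
      linear_combination e₁ - e₂ - e₃ + e₄ - e₅ + e₆ - e₇
    omega

variable {s : ℕ}

def removeLine (m : Fin s → ℤ) (j₁ j₂ : Fin s) (k : ℤ) : Fin s → ℤ :=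
  fun i => m i - if i = j₁ ∨ i = j₂ then k else 0

variable {m : Fin s → ℤ} {j₁ j₂ : Fin s} {k d : ℤ}

theorem removeLine_left : removeLine m j₁ j₂ k j₁ = m j₁ - k := by simp [removeLine]

theorem removeLine_right : removeLine m j₁ j₂ k j₂ = m j₂ - k := by simp [removeLine]

theorem removeLine_of_ne {i : Fin s} (h₁ : i ≠ j₁) (h₂ : i ≠ j₂) :
    removeLine m j₁ j₂ k i = m i := by
  simp [removeLine, h₁, h₂]

theorem sum_removeLine (hj : j₁ ≠ j₂) :
    ∑ i, removeLine m j₁ j₂ k i = ∑ i, m i - 2 * k := by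
  have : ∑ i, (m i - removeLine m j₁ j₂ k i) = 2 * k := by
    rw [Fintype.sum_eq_add j₁ j₂ hj fun i hi => by simp [removeLine_of_ne hi.1 hi.2],
      removeLine_left, removeLine_right]
    ring
  rw [Finset.sum_sub_distrib] at this
  linarith

theorem kC2_removeLine (hj : j₁ ≠ j₂) :
    kC2 (d - k) s (removeLine m j₁ j₂ k) = kC2 d s m := by
  have := congrArg (fun z : ℤ => (z : ℚ)) (sum_removeLine (m := m) (k := k) hj)
  push_cast at this
  simp only [kC2, this]
  push_cast
  ring_nf

theorem eps2_removeLine (hj : j₁ ≠ j₂) :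
    eps2 (d - k) s (removeLine m j₁ j₂ k) = eps2 d s m := by
  simp only [eps2, kC2_removeLine hj, sum_removeLine hj]
  ring

theorem removeLine_nonneg (hk : k = max (m j₁ + m j₂ - d) 0) (hm : ∀ i, 0 ≤ m i)
    (h₁d : m j₁ ≤ d) (h₂d : m j₂ ≤ d) (i : Fin s) : 0 ≤ removeLine m j₁ j₂ k i := by
  have := hm i
  simp only [removeLine]
  split_ifs with h
  · rcases h with rfl | rfl <;> omega
  · omega

theorem max_removeLine_left_right (hk : k = max (m j₁ + m j₂ - d) 0) :
    max (removeLine m j₁ j₂ k j₁ + removeLine m j₁ j₂ k j₂ - (d - k)) 0 = 0 := by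
  rw [removeLine_left, removeLine_right]
  omega

theorem max_removeLine_pair (hj : j₁ < j₂) (hk : k = max (m j₁ + m j₂ - d) 0)
    {i₁ i₂ : Fin s} (hi : i₁ < i₂) (hne : (i₁, i₂) ≠ (j₁, j₂))
    (hfour : i₁ ≠ j₁ → i₁ ≠ j₂ → i₂ ≠ j₁ → i₂ ≠ j₂ →
      m i₁ + m i₂ + m j₁ + m j₂ ≤ 2 * d) :
    max (removeLine m j₁ j₂ k i₁ + removeLine m j₁ j₂ k i₂ - (d - k)) 0
      = max (m i₁ + m i₂ - d) 0 := by
  rw [Ne, Prod.mk.injEq] at hne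
  simp only [removeLine]
  split_ifs <;> omega

theorem G2_removeLine (hj : j₁ < j₂) (hk : k = max (m j₁ + m j₂ - d) 0)
    (h₁ : 0 ≤ m j₁) (h₂ : 0 ≤ m j₂) (h₁d : m j₁ ≤ d) (h₂d : m j₂ ≤ d)
    (hpairs : ∀ i₁ i₂, i₁ < i₂ → (i₁, i₂) ≠ (j₁, j₂) →
      max (removeLine m j₁ j₂ k i₁ + removeLine m j₁ j₂ k i₂ - (d - k)) 0
        = max (m i₁ + m i₂ - d) 0) :
    G2 (d - k) s (removeLine m j₁ j₂ k) = G2 d s m := by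
  have hsingles : ∑ i, Cb (removeLine m j₁ j₂ k i + 1) 2 - ∑ i, Cb (m i + 1) 2
      = Cb (m j₁ - k + 1) 2 - Cb (m j₁ + 1) 2
        + (Cb (m j₂ - k + 1) 2 - Cb (m j₂ + 1) 2) := by
    rw [← Finset.sum_sub_distrib, Fintype.sum_eq_add j₁ j₂ hj.ne
      fun i hi => by simp [removeLine_of_ne hi.1 hi.2], removeLine_left, removeLine_right]
  have hpairsum :
      ∑ p ∈ univ.filter (fun p : Fin s × Fin s => p.1 < p.2),
        Cb (removeLine m j₁ j₂ k p.1 + removeLine m j₁ j₂ k p.2 - (d - k)) 2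
      - ∑ p ∈ univ.filter (fun p : Fin s × Fin s => p.1 < p.2), Cb (m p.1 + m p.2 - d) 2
      = - Cb (m j₁ + m j₂ - d) 2 := by
    rw [← Finset.sum_sub_distrib, Finset.sum_eq_single_of_mem (j₁, j₂) (by simp [hj])]
    · rw [removeLine_left, removeLine_right, Cb_two_of_le_one (by omega), zero_sub]
    · rintro ⟨i₁, i₂⟩ hp hne
      rw [Cb_two_eq_of_max_eq (hpairs i₁ i₂ (by simpa using hp) hne), sub_self]
  have hhead := Cb_two_sub_line hk h₁ h₂ h₁d h₂d
  simp only [G2, kC2_removeLine hj.ne, eps2_removeLine hj.ne]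
  linarith

end Numerics

theorem linSysZ_removeLine_ne_bot {d s : ℕ} {m : Fin s → ℕ} {tp : Fin s → ℂ}
    (htp : Function.Injective tp) {P : MvPolynomial (Fin 3) ℂ} (hP : P ≠ 0)
    (hd : P.IsHomogeneous d) (hm : ∀ i, (m i : ℕ∞) ≤ vanishingOrder (rncPoint 2 (tp i)) P)
    {j₁ j₂ : Fin s} (hj : j₁ ≠ j₂) {k : ℤ} (hk0 : 0 ≤ k)
    (hk : k ≤ max ((m j₁ : ℤ) + m j₂ - d) 0) :
    linSysZ 2 (d - k) s (removeLine (fun i => (m i : ℤ)) j₁ j₂ k) tp ≠ ⊥ := by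
  lift k to ℕ using hk0
  have h₁d := le_of_le_vanishingOrder hP hd (hm j₁)
  have h₂d := le_of_le_vanishingOrder hP hd (hm j₂)
  have hkab : k ≤ m j₁ + m j₂ - d := by omega
  obtain ⟨Q, rfl, hQ, hQd, hQ₁, hQ₂⟩ :=
    exists_secant_pow_mul (htp.ne hj) hP hd (hm j₁) (hm j₂) hkab
  have hkd : (0 : ℤ) ≤ d - k := by omega
  rw [Submodule.ne_bot_iff]
  refine ⟨Q, (mem_linSysZ_iff hkd _ _ _).mpr ⟨?_, fun i => ?_⟩, hQ⟩
  · rwa [show ((d : ℤ) - k).toNat = d - k by omega]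
  by_cases hi₁ : i = j₁
  · rw [hi₁, removeLine_left, show ((m j₁ : ℤ) - k).toNat = m j₁ - k by omega]
    exact hQ₁
  by_cases hi₂ : i = j₂
  · rw [hi₂, removeLine_right, show ((m j₂ : ℤ) - k).toNat = m j₂ - k by omega]
    exact hQ₂
  rw [removeLine_of_ne hi₁ hi₂, Int.toNat_natCast,
    ← vanishingOrder_secant_pow_mul (htp.ne hi₁) (htp.ne hi₂) k]
  exact hm i

theorem stmt_9_general (d s : ℕ)
    (m : Fin s → ℕ) (tp : Fin s → ℂ) (htp : Function.Injective tp)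
    (heff : linSysZ 2 (d : ℤ) s (fun i => (m i : ℤ)) tp ≠ ⊥)
    (j₁ j₂ : Fin s) (hj : j₁ < j₂) :
    let k : ℤ := max ((m j₁ : ℤ) + (m j₂ : ℤ) - d) 0
    let d' : ℤ := (d : ℤ) - k
    let m' : Fin s → ℤ := fun i => (m i : ℤ) - (if i = j₁ ∨ i = j₂ then k else 0)
    (linSysZ 2 d' s m' tp ≠ ⊥) ∧
    (∀ i, 0 ≤ m' i) ∧
    (max (m' j₁ + m' j₂ - d') 0 = 0) ∧
    (∀ i₁ i₂ : Fin s, i₁ < i₂ → (i₁, i₂) ≠ (j₁, j₂) →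
      max (m' i₁ + m' i₂ - d') 0 = max ((m i₁ : ℤ) + (m i₂ : ℤ) - d) 0) ∧
    (kC2 d' s m' = kC2 (d : ℤ) s (fun i => (m i : ℤ))) ∧
    (G2 d' s m' = G2 (d : ℤ) s (fun i => (m i : ℤ))) := by
  intro k d' m'
  obtain ⟨P, hP, hd, hm⟩ := exists_ne_zero_of_linSysZ_ne_bot heff
  have hmd : ∀ i, (m i : ℤ) ≤ d := fun i => by exact_mod_cast le_of_le_vanishingOrder hP hd (hm i)
  have hfour : ∀ i₁ i₂, i₁ < i₂ → i₁ ≠ j₁ → i₁ ≠ j₂ → i₂ ≠ j₁ → i₂ ≠ j₂ →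
      (m i₁ : ℤ) + m i₂ + m j₁ + m j₂ ≤ 2 * d := fun i₁ i₂ hi h₁ h₂ h₃ h₄ => by
    have := add_add_add_le_of_vanishingOrder (htp.ne hi.ne) (htp.ne hj.ne) (htp.ne h₁)
      (htp.ne h₂) (htp.ne h₃) (htp.ne h₄) hP hd (hm i₁) (hm i₂) (hm j₁) (hm j₂)
    omega
  have hpairs : ∀ i₁ i₂ : Fin s, i₁ < i₂ → (i₁, i₂) ≠ (j₁, j₂) →
      max (m' i₁ + m' i₂ - d') 0 = max ((m i₁ : ℤ) + (m i₂ : ℤ) - d) 0 := fun i₁ i₂ hi hne =>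
    max_removeLine_pair (m := fun i => (m i : ℤ)) hj rfl hi hne (hfour i₁ i₂ hi)
  exact ⟨linSysZ_removeLine_ne_bot htp hP hd hm hj.ne (le_max_right _ _) le_rfl,
    removeLine_nonneg (m := fun i => (m i : ℤ)) rfl (fun i => by positivity) (hmd j₁) (hmd j₂),
    max_removeLine_left_right (m := fun i => (m i : ℤ)) rfl, hpairs, kC2_removeLine hj.ne,
    G2_removeLine (m := fun i => (m i : ℤ)) hj rfl (by positivity) (by positivity) (hmd j₁)
      (hmd j₂) hpairs⟩

/-- **Removing a line from the base locus (Lemma 1.10).** Subtracting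
`k = max(m_{j₁}+m_{j₂}−d, 0)` copies of the line through `p_{j₁}, p_{j₂}` from an
effective planar system with nonnegative multiplicities yields an effective system
with nonnegative multiplicities, kills `k_{j₁j₂}`, preserves all other `k_{i₁i₂}⁺`
and `k_C`, and preserves `G`. -/
theorem stmt_9 (d s : ℕ) (hs : 5 ≤ s)
    (m : Fin s → ℕ) (tp : Fin s → ℂ) (htp : Function.Injective tp)
    (heff : linSysZ 2 (d : ℤ) s (fun i => (m i : ℤ)) tp ≠ ⊥)
    (j₁ j₂ : Fin s) (hj : j₁ < j₂) :
    let k : ℤ := max ((m j₁ : ℤ) + (m j₂ : ℤ) - d) 0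
    let d' : ℤ := (d : ℤ) - k
    let m' : Fin s → ℤ := fun i => (m i : ℤ) - (if i = j₁ ∨ i = j₂ then k else 0)
    (linSysZ 2 d' s m' tp ≠ ⊥) ∧
    (∀ i, 0 ≤ m' i) ∧
    (max (m' j₁ + m' j₂ - d') 0 = 0) ∧
    (∀ i₁ i₂ : Fin s, i₁ < i₂ → (i₁, i₂) ≠ (j₁, j₂) →
      max (m' i₁ + m' i₂ - d') 0 = max ((m i₁ : ℤ) + (m i₂ : ℤ) - d) 0) ∧
    (kC2 d' s m' = kC2 (d : ℤ) s (fun i => (m i : ℤ))) ∧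
    (G2 d' s m' = G2 (d : ℤ) s (fun i => (m i : ℤ))) :=
  stmt_9_general d s m tp htp heff j₁ j₂ hj
end
end

section
/- For every t, a, s, n ∈ ℕ with s ≥ n+3, one has F_t(a, s, s−n−3, n) = C(a,n) + Σ_{i=1}^{t} C(s−n−4+i, i)·C(a,n). -/
open Finset

noncomputable section

/-- The recursively defined function `F_t(a, s, ε, n)`. -/
def Fb : ℕ → ℤ → ℕ → ℕ → ℤ → ℤ
  | 0, a, _, _, n => Cb a n
  | (t+1), a, s, e, n =>
      if n < 0 then 0 else
      Cb a n
        + ∑ j ∈ Finset.range (t+1), Cb ((s : ℤ) - n - 4 + (j+1)) (j+1) * Cb (a + (j+1)) n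
        - ∑ j ∈ Finset.range (t+1), Cb (e : ℤ) (j+1) * Fb (t - j) a s e (n - (j+1))
  termination_by t _ _ _ _ => t
  decreasing_by omega

/-!
Put `k := s - n - 3 - ε`. For every `k ≥ 0`, `F_t(a, s, ε, n)` equals the coefficient of `z^t` in
`(1 - z)^{-(ε+1)} (1 - y z)^{-k}`, read through the substitution `y^r ↦ C(a + r, n)`. This closed
form obeys the recursion defining `F` because
`Σ_j C(ε, j) ((y - 1) z)^j (1 - z)^{-(ε+1)} (1 - y z)^{-(k+j)} = (1 - z)^{-1} (1 - y z)^{-(k+ε)}`,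
which is the binomial theorem for `(1 + (y - 1) z / (1 - y z))^ε = ((1 - z) / (1 - y z))^ε`.
The substitution is `p ↦ [x^n] (1 + x)^a p(1 + x)`, under which `(y - 1)^j = x^j` lowers `n` by `j`,
as the recursion requires. At `k = 0` the closed form is `C(ε + t, t) C(a, n)`, which is the claimed
sum by the hockey-stick identity.
-/

namespace PowerSeries

variable {R : Type*} [CommRing R]

theorem coeff_mk_one_pow (d n : ℕ) : coeff n ((mk 1 : R⟦X⟧) ^ d) = d.multichoose n := by
  rcases d with _ | d
  · rcases n with _ | n <;> simp [coeff_one]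
  · rw [mk_one_pow_eq_mk_choose_add, coeff_mk, Nat.multichoose_eq, Nat.choose_symm_add]
    congr 2
    omega

theorem coeff_mk_one_pow_mul_rescale_pow (y : R) (a b u : ℕ) :
    coeff u ((mk 1 : R⟦X⟧) ^ a * rescale y (mk 1) ^ b) =
      ∑ r ∈ range (u + 1), (a.multichoose (u - r) * b.multichoose r : ℕ) * y ^ r := by
  rw [mul_comm, coeff_mul, Finset.Nat.sum_antidiagonal_eq_sum_range_succ
    (fun i j => coeff i (rescale y (mk 1) ^ b) * coeff j ((mk 1 : R⟦X⟧) ^ a))]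
  refine sum_congr rfl fun r _ => ?_
  rw [← map_pow, coeff_rescale, coeff_mk_one_pow, coeff_mk_one_pow]
  push_cast
  ring

theorem sum_choose_mul_mk_one_pow_mul_rescale_pow (y : R) (e k : ℕ) :
    ∑ j ∈ range (e + 1), (e.choose j : R⟦X⟧) * (C (y - 1) * X) ^ j *
        ((mk 1 : R⟦X⟧) ^ (e + 1) * rescale y (mk 1) ^ (k + j)) =
      (mk 1 : R⟦X⟧) ^ 1 * rescale y (mk 1) ^ (k + e) := by
  set U : R⟦X⟧ := mk 1
  set W : R⟦X⟧ := rescale y (mk 1)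
  have hU : U * (1 - X) = 1 := mk_one_mul_one_sub_eq_one R
  have hW : W * (1 - C y * X) = 1 := by
    simpa [rescale_X] using congrArg (rescale y) hU
  have hlin : C (y - 1) * X * W + 1 = W * (1 - X) := by
    rw [map_sub, map_one]
    linear_combination -hW
  calc _ = U ^ (e + 1) * W ^ k *
        ∑ j ∈ range (e + 1), (C (y - 1) * X * W) ^ j * 1 ^ (e - j) * (e.choose j : R⟦X⟧) := by
        rw [mul_sum]
        refine sum_congr rfl fun j _ => ?_
        ring
    _ = U * W ^ (k + e) * (U * (1 - X)) ^ e := by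
        rw [← add_pow, hlin, mul_pow, mul_pow]
        ring
    _ = _ := by rw [hU, one_pow, mul_one, pow_one]

theorem coeff_choose_mul_X_pow_mul (y : R) (e j t : ℕ) (F : R⟦X⟧) :
    coeff t ((e.choose j : R⟦X⟧) * (C (y - 1) * X) ^ j * F) =
      if j ≤ t then (e.choose j : R) * (y - 1) ^ j * coeff (t - j) F else 0 := by
  have hC : (e.choose j : R⟦X⟧) * (C (y - 1) * X) ^ j * F =
      C ((e.choose j : R) * (y - 1) ^ j) * (X ^ j * F) := by
    simp only [map_mul, map_pow, map_natCast]
    ring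
  rw [hC, coeff_C_mul, coeff_X_pow_mul']
  split_ifs <;> simp

end PowerSeries

theorem sum_choose_mul_sub_one_pow_mul_sum_multichoose {R : Type*} [CommRing R] (y : R)
    (e k t : ℕ) :
    ∑ j ∈ range (t + 1), (e.choose j : R) * (y - 1) ^ j *
        ∑ r ∈ range (t - j + 1), ((e + 1).multichoose (t - j - r) * (k + j).multichoose r : ℕ) *
          y ^ r =
      ∑ r ∈ range (t + 1), ((k + e).multichoose r : ℕ) * y ^ r := by
  open PowerSeries in
  have hcoeff := congrArg (coeff t) (sum_choose_mul_mk_one_pow_mul_rescale_pow y e k)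
  simp only [map_sum, coeff_choose_mul_X_pow_mul, coeff_mk_one_pow_mul_rescale_pow,
    Nat.multichoose_one, one_mul] at hcoeff
  rw [← hcoeff]
  set g : ℕ → R := fun j => (e.choose j : R) * (y - 1) ^ j *
    ∑ r ∈ range (t - j + 1), ((e + 1).multichoose (t - j - r) * (k + j).multichoose r : ℕ) * y ^ r
  calc ∑ j ∈ range (t + 1), g j = ∑ j ∈ range (t + 1), if j ≤ t then g j else 0 :=
        sum_congr rfl fun j hj => (if_pos (Nat.lt_succ_iff.mp (mem_range.mp hj))).symm
    _ = ∑ j ∈ range (e + t + 1), if j ≤ t then g j else 0 :=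
        sum_subset (range_subset_range.mpr (by omega)) fun j _ hj =>
          if_neg (by simp only [mem_range] at hj; omega)
    _ = ∑ j ∈ range (e + 1), if j ≤ t then g j else 0 := by
        refine (sum_subset (range_subset_range.mpr (by omega)) fun j _ hj => ?_).symm
        simp only [mem_range, not_lt] at hj
        simp [g, Nat.choose_eq_zero_of_lt (Nat.lt_of_succ_le hj)]

theorem Cb_natCast (p q : ℕ) : Cb p q = p.choose q := by
  rw [Cb]
  split_ifs with h
  · simp
  · simp [Nat.choose_eq_zero_of_lt (by omega : p < q)]

theorem Cb_of_neg (x : ℤ) {m : ℤ} (hm : m < 0) : Cb x m = 0 := by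
  rw [Cb, if_neg (by omega)]

open Polynomial in
theorem coeff_X_pow_mul_one_add_X_pow (j b m : ℕ) :
    ((X : ℤ[X]) ^ j * (1 + X) ^ b).coeff m = Cb b ((m : ℤ) - j) := by
  rw [coeff_X_pow_mul', coeff_one_add_X_pow]
  split_ifs with h
  · rw [← Nat.cast_sub h, Cb_natCast]
  · rw [Cb_of_neg _ (by omega)]

open Polynomial in
theorem coeff_one_add_X_pow_mul_natCast_mul (a c j r m : ℕ) :
    ((1 + X : ℤ[X]) ^ a * ((c : ℤ[X]) * X ^ j * (1 + X) ^ r)).coeff m =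
      c * Cb (a + r) ((m : ℤ) - j) := by
  rw [show (1 + X : ℤ[X]) ^ a * ((c : ℤ[X]) * X ^ j * (1 + X) ^ r) =
      (c : ℤ[X]) * (X ^ j * (1 + X) ^ (a + r)) by ring, coeff_natCast_mul,
    coeff_X_pow_mul_one_add_X_pow, Nat.cast_add]

-- `[z^t] (1 - z)^{-(e+1)} (1 - y z)^{-k}` with `y^r` replaced by `C(a + r, m)`.
def fbClosedForm (a e k t : ℕ) (m : ℤ) : ℤ :=
  ∑ r ∈ range (t + 1), ((e + 1).multichoose (t - r) * k.multichoose r : ℕ) * Cb (a + r) m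

open Polynomial in
theorem sum_choose_mul_fbClosedForm (a e k t m : ℕ) :
    ∑ j ∈ range (t + 1), (e.choose j : ℤ) * fbClosedForm a e (k + j) (t - j) (m - j) =
      ∑ r ∈ range (t + 1), ((k + e).multichoose r : ℤ) * Cb (a + r) m := by
  have h := congrArg (fun p => ((1 + X : ℤ[X]) ^ a * p).coeff m)
    (sum_choose_mul_sub_one_pow_mul_sum_multichoose (1 + X) e k t)
  simp only [add_sub_cancel_left, mul_sum, finsetSum_coeff] at h
  convert h using 2 with j _ r _
  · rw [fbClosedForm, mul_sum]
    refine sum_congr rfl fun r _ => ?_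
    rw [show (e.choose j : ℤ[X]) * X ^ j *
        ((((e + 1).multichoose (t - j - r) * (k + j).multichoose r : ℕ) : ℤ[X]) * (1 + X) ^ r) =
        ((e.choose j * ((e + 1).multichoose (t - j - r) * (k + j).multichoose r) : ℕ) : ℤ[X]) *
          X ^ j * (1 + X) ^ r by push_cast; ring, coeff_one_add_X_pow_mul_natCast_mul]
    push_cast
    ring
  · rw [show ((k + e).multichoose r : ℤ[X]) * (1 + X) ^ r =
        ((k + e).multichoose r : ℤ[X]) * X ^ 0 * (1 + X) ^ r by ring,
      coeff_one_add_X_pow_mul_natCast_mul, Nat.cast_zero, sub_zero]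

theorem Fb_of_neg (t : ℕ) (a : ℤ) (s e : ℕ) {m : ℤ} (hm : m < 0) : Fb t a s e m = 0 := by
  rcases t with _ | t
  · rw [Fb, Cb_of_neg _ hm]
  · rw [Fb, if_pos hm]

theorem fbClosedForm_of_neg (a e k t : ℕ) {m : ℤ} (hm : m < 0) : fbClosedForm a e k t m = 0 :=
  sum_eq_zero fun r _ => by rw [Cb_of_neg _ hm, mul_zero]

theorem Cb_sub_one_add_eq_multichoose (c j : ℕ) :
    Cb ((c : ℤ) - 1 + (j + 1)) (j + 1) = c.multichoose (j + 1) := by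
  rw [show (c : ℤ) - 1 + (j + 1) = (c + j : ℕ) by push_cast; ring,
    show (j : ℤ) + 1 = (j + 1 : ℕ) by push_cast; ring, Cb_natCast, Nat.multichoose_eq,
    Nat.add_succ_sub_one]

theorem Fb_eq_fbClosedForm (a e k t s : ℕ) (m : ℤ) (hs : (s : ℤ) = m + 3 + k + e) :
    Fb t a s e m = fbClosedForm a e k t m := by
  induction t using Nat.strong_induction_on generalizing k m with
  | _ t ih =>
  rcases lt_or_ge m 0 with hm | hm
  · rw [Fb_of_neg _ _ _ _ hm, fbClosedForm_of_neg _ _ _ _ hm]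
  lift m to ℕ using hm
  rcases t with _ | t
  · simp [Fb, fbClosedForm]
  rw [Fb, if_neg (by omega)]
  have hcoef : ∀ j ∈ range (t + 1),
      Cb ((s : ℤ) - m - 4 + (j + 1)) (j + 1) * Cb (a + (j + 1)) m =
        ((k + e).multichoose (j + 1) : ℤ) * Cb (a + (j + 1 : ℕ)) m := by
    intro j _
    rw [show (s : ℤ) - m - 4 = (k + e : ℕ) - 1 by push_cast; omega,
      Cb_sub_one_add_eq_multichoose, Nat.cast_succ]
  have hih : ∀ j ∈ range (t + 1), Cb e (j + 1) * Fb (t - j) a s e (m - (j + 1)) =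
      (e.choose (j + 1) : ℤ) *
        fbClosedForm a e (k + (j + 1)) (t + 1 - (j + 1)) (m - (j + 1 : ℕ)) := by
    intro j hj
    rw [show (j : ℤ) + 1 = (j + 1 : ℕ) by push_cast; ring, Cb_natCast,
      Nat.add_sub_add_right, ih (t - j) (by omega) (k + (j + 1)) _ (by push_cast at hs ⊢; omega)]
  have hsplit := sum_choose_mul_fbClosedForm a e k (t + 1) m
  rw [sum_range_succ', sum_range_succ' _ (t + 1)] at hsplit
  simp only [Nat.choose_zero_right, Nat.multichoose_zero_right, Nat.cast_one, one_mul, add_zero,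
    Nat.sub_zero, Nat.cast_zero, sub_zero] at hsplit
  rw [sum_congr rfl hcoef, sum_congr rfl hih]
  linear_combination -hsplit

theorem fbClosedForm_zero (a e t : ℕ) (m : ℤ) :
    fbClosedForm a e 0 t m = (t + e).choose e * Cb a m := by
  rw [fbClosedForm, sum_range_succ']
  simp only [Nat.multichoose_zero_succ, mul_zero, Nat.cast_zero, zero_mul, sum_const_zero,
    zero_add, Nat.multichoose_zero_right, mul_one, Nat.sub_zero, add_zero]
  rw [Nat.multichoose_eq, show e + 1 + t - 1 = t + e by omega, Nat.choose_symm_add]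

/-- **Closed form at maximal exceeding number (Lemma A.2).**
`F_t(a,s,s−n−3,n) = C(a,n) + Σ_{i=1}^t C(s−n−4+i,i)·C(a,n)` for `s ≥ n+3`. -/
theorem stmt_14 (t a s n : ℕ) (hs : n + 3 ≤ s) :
    Fb t (a : ℤ) s (s - n - 3) (n : ℤ) =
      Cb (a : ℤ) n +
        ∑ j ∈ Finset.range t, Cb ((s : ℤ) - n - 4 + (j + 1)) (j + 1) * Cb (a : ℤ) n := by
  have hs' : (s : ℤ) = n + 3 + (0 : ℕ) + (s - n - 3 : ℕ) := by push_cast; omega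
  have hterm : ∀ j ∈ range t, Cb ((s : ℤ) - n - 4 + (j + 1)) (j + 1) * Cb a n =
      (s - n - 3).multichoose (j + 1) * Cb a n := by
    intro j _
    rw [show (s : ℤ) - n - 4 = (s - n - 3 : ℕ) - 1 by omega, Cb_sub_one_add_eq_multichoose]
  rw [Fb_eq_fbClosedForm a (s - n - 3) 0 t s n hs', fbClosedForm_zero, sum_congr rfl hterm,
    ← sum_mul, ← Nat.sum_range_multichoose, sum_range_succ', Nat.multichoose_zero_right]
  push_cast
  ring

end
end

section
/- For every t, a, s, n ∈ ℕ with t ≥ 1, n ≥ 1 and s ≥ n+3, one has F_t(a, s, 0, n) + F_{t−1}(a, s, 0, n−1) = F_t(a+t, s, s−n−3, n). -/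
/-!
For `s = m + 3 + d` with `d ≥ 0`, strong induction on `t` gives the closed form
`F_t(b, s, e, m) = ∑_{j ≤ t} C(t+d, d+j) · multichoose(d − e, j) · C(b, m − j)`:
the positive part of the recursion is a hockey-stick sum, and after substituting the closed form
for the lower `F`s the subtracted part is a Chu–Vandermonde convolution.
With `ε = s − n − 3 = d` the factor `multichoose(0, j)` kills every term but `j = 0`, so the right
side is `C(t+d, d) C(a+t, n)`. On the left the two closed forms combine through
`multichoose(d, j) + multichoose(d+1, j−1) = C(d+j, j)` and
`C(t+d, d+j) C(d+j, j) = C(t+d, d) C(t, j)`, which is Vandermonde's expansion of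
`C(t+d, d) C(a+t, n)`.
-/

open Finset

noncomputable section

lemma Cb_of_neg_s15 {a k : ℤ} (hk : k < 0) : Cb a k = 0 := by
  rw [Cb, if_neg (by omega)]

lemma Cb_natCast_s15 (a k : ℕ) : Cb a k = a.choose k := by
  rw [Cb]
  split_ifs with h
  · simp
  · rw [Nat.choose_eq_zero_of_lt (by omega), Nat.cast_zero]

lemma Cb_add_natCast (b i : ℕ) (m : ℤ) :
    Cb ((b : ℤ) + i) m = ∑ k ∈ range (i + 1), (i.choose k : ℤ) * Cb b (m - k) := by
  rcases lt_or_ge m 0 with hm | hm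
  · rw [Cb_of_neg_s15 hm]
    exact (sum_eq_zero fun k _ => by rw [Cb_of_neg_s15 (by omega), mul_zero]).symm
  lift m to ℕ using hm
  calc Cb ((b : ℤ) + i) m = ((i + b).choose m : ℕ) := by rw [← Nat.cast_add, Cb_natCast_s15, add_comm]
    _ = ∑ k ∈ range (m + 1), (i.choose k : ℤ) * b.choose (m - k) := by
      rw [Nat.add_choose_eq,
        Nat.sum_antidiagonal_eq_sum_range_succ (fun p q => i.choose p * b.choose q)]
      push_cast
      rfl
    _ = ∑ k ∈ range (m + 1), (i.choose k : ℤ) * Cb b (m - k) :=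
      sum_congr rfl fun k hk => by
        rw [← Nat.cast_sub (by simp at hk; omega), Cb_natCast_s15]
    _ = ∑ k ∈ range (m + i + 1), (i.choose k : ℤ) * Cb b (m - k) :=
      sum_subset (range_subset_range.2 (by omega)) fun k _ hk => by
        rw [Cb_of_neg_s15 (by simp at hk; omega), mul_zero]
    _ = ∑ k ∈ range (i + 1), (i.choose k : ℤ) * Cb b (m - k) :=
      (sum_subset (range_subset_range.2 (by omega)) fun k _ hk => by
        rw [Nat.choose_eq_zero_of_lt (by simp at hk; omega), Nat.cast_zero, zero_mul]).symm

lemma Ring.choose_add_natCast (x : ℤ) (e n : ℕ) :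
    Ring.choose (x + e) n = ∑ i ∈ range (n + 1), (e.choose i : ℤ) * Ring.choose x (n - i) := by
  rw [add_comm, Ring.add_choose_eq n (Commute.all _ _),
    Nat.sum_antidiagonal_eq_sum_range_succ (fun i j => Ring.choose (e : ℤ) i * Ring.choose x j)]
  simp only [Ring.choose_natCast]

lemma Ring.multichoose_natCast (n k : ℕ) : Ring.multichoose (n : ℤ) k = n.multichoose k := by
  rw [Nat.multichoose_eq]
  rfl

lemma Nat.multichoose_add_mul_choose (d k r : ℕ) :
    d.multichoose (k + r) * (k + r).choose k = d.multichoose k * (d + k).multichoose r := by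
  simp only [Nat.multichoose_eq]
  rw [Nat.choose_symm_add, Nat.choose_mul (Nat.le_add_left r k), mul_comm]
  congr 2 <;> omega

lemma Nat.sum_multichoose_mul_choose (d N k : ℕ) (hk : k ≤ N) :
    ∑ i ∈ range (N + 1), d.multichoose i * i.choose k =
      (N + d).choose (d + k) * d.multichoose k := by
  obtain ⟨r, rfl⟩ : ∃ r, N = k + r := ⟨N - k, by omega⟩
  rw [show k + r + 1 = k + (r + 1) by ring, sum_range_add,
    sum_eq_zero fun i hi => by rw [Nat.choose_eq_zero_of_lt (mem_range.1 hi), mul_zero], zero_add]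
  simp only [Nat.multichoose_add_mul_choose, ← mul_sum, Nat.sum_range_multichoose]
  rw [mul_comm]
  congr 2
  ring

lemma sum_choose_succ_mul_multichoose (x : ℤ) (e c : ℕ) :
    ∑ j ∈ range (c + 1), (e.choose (j + 1) : ℤ) * Ring.multichoose (x + (j + 1)) (c - j) =
      Ring.multichoose (x + e) (c + 1) - Ring.multichoose x (c + 1) := by
  have vandermonde := Ring.choose_add_natCast (x + c) e (c + 1)
  rw [sum_range_succ'] at vandermonde
  simp only [Ring.multichoose_eq]
  rw [show x + e + ((c + 1 : ℕ) : ℤ) - 1 = x + c + e by push_cast; ring,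
    show x + ((c + 1 : ℕ) : ℤ) - 1 = x + c by push_cast; ring, vandermonde]
  simp only [Nat.choose_zero_right, Nat.cast_one, one_mul, Nat.sub_zero, add_sub_cancel_right]
  refine sum_congr rfl fun j hj => ?_
  have hjc : j ≤ c := Nat.lt_succ_iff.1 (mem_range.1 hj)
  rw [show x + (j + 1) + ((c - j : ℕ) : ℤ) - 1 = x + c by push_cast [hjc]; ring,
    show c + 1 - (j + 1) = c - j by omega]

lemma sum_multichoose_mul_Cb_add (N d b : ℕ) (m : ℤ) :
    ∑ i ∈ range (N + 1), (d.multichoose i : ℤ) * Cb ((b : ℤ) + i) m =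
      ∑ k ∈ range (N + 1), ((N + d).choose (d + k) * d.multichoose k : ℕ) * Cb b (m - k) := by
  calc _ = ∑ i ∈ range (N + 1), ∑ k ∈ range (N + 1),
          (d.multichoose i : ℤ) * (i.choose k * Cb b (m - k)) :=
        sum_congr rfl fun i hi => by
          rw [Cb_add_natCast, mul_sum]
          exact sum_subset (range_subset_range.2 (mem_range.1 hi)) fun k _ hk => by
            rw [Nat.choose_eq_zero_of_lt (by simpa using hk), Nat.cast_zero, zero_mul, mul_zero]
    _ = _ := by
      rw [sum_comm]
      refine sum_congr rfl fun k hk => ?_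
      rw [← Nat.sum_multichoose_mul_choose d N k (Nat.lt_succ_iff.1 (mem_range.1 hk)),
        Nat.cast_sum, sum_mul]
      push_cast
      simp only [mul_assoc]

lemma Nat.choose_add_mul_multichoose_succ (t d j : ℕ) :
    (t + d).choose (d + j) * (d + 1).multichoose j = (t + d).choose d * t.choose j := by
  rw [Nat.multichoose_eq, show d + 1 + j - 1 = d + j by omega, ← Nat.choose_symm_add,
    Nat.choose_mul (Nat.le_add_right d j)]
  congr 2 <;> omega

theorem Fb_eq_sum (t b s e d : ℕ) (m : ℤ) (hs : (s : ℤ) = m + 3 + d) :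
    Fb t b s e m = ∑ j ∈ range (t + 1),
      ((t + d).choose (d + j) : ℤ) * Ring.multichoose ((d : ℤ) - e) j * Cb b (m - j) := by
  induction t using Nat.strong_induction_on generalizing m d with
  | _ t ih =>
  rcases t with _ | T
  · rw [Fb]
    simp
  rcases lt_or_ge m 0 with hm | hm
  · rw [Fb, if_pos hm]
    exact (sum_eq_zero fun j _ => by rw [Cb_of_neg_s15 (by omega), mul_zero]).symm
  rw [Fb, if_neg (not_lt.2 hm)]
  have positive : Cb b m + ∑ j ∈ range (T + 1),
      Cb ((s : ℤ) - m - 4 + (j + 1)) (j + 1) * Cb (b + (j + 1)) m =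
      ∑ k ∈ range (T + 1 + 1),
        ((T + 1 + d).choose (d + k) * d.multichoose k : ℕ) * Cb b (m - k) := by
    rw [← sum_multichoose_mul_Cb_add,
      sum_range_succ' (fun i => (d.multichoose i : ℤ) * Cb ((b : ℤ) + i) m), add_comm]
    congr 1
    · refine sum_congr rfl fun j _ => ?_
      rw [show (s : ℤ) - m - 4 + (j + 1) = ((d + j : ℕ) : ℤ) by push_cast; omega,
        show (j : ℤ) + 1 = ((j + 1 : ℕ) : ℤ) by push_cast; ring, Cb_natCast_s15, Nat.multichoose_eq,
        show d + (j + 1) - 1 = d + j by omega]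
    · simp [Nat.multichoose_zero_right]
  have negative : ∑ j ∈ range (T + 1), Cb e (j + 1) * Fb (T - j) b s e (m - (j + 1)) =
      ∑ c ∈ range (T + 1), ((T + 1 + d).choose (d + (c + 1)) : ℤ) *
        (d.multichoose (c + 1) - Ring.multichoose ((d : ℤ) - e) (c + 1)) * Cb b (m - (c + 1)) := by
    set g : ℕ → ℕ → ℤ := fun j r => (e.choose (j + 1) : ℤ) *
      Ring.multichoose ((d : ℤ) - e + (j + 1)) r *
      (((T + 1 + d).choose (d + (j + r + 1)) : ℤ) * Cb b (m - ((j + r : ℕ) + 1)))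
    calc _ = ∑ j ∈ range (T + 1), ∑ r ∈ range (T + 1 - j), g j r :=
          sum_congr rfl fun j hj => by
            have hjT : j ≤ T := Nat.lt_succ_iff.1 (mem_range.1 hj)
            rw [ih (T - j) (by omega) (d + j + 1) (m - (j + 1)) (by push_cast; omega),
              show T - j + 1 = T + 1 - j by omega, show T - j + (d + j + 1) = T + 1 + d by omega,
              show (j : ℤ) + 1 = ((j + 1 : ℕ) : ℤ) by push_cast; ring, Cb_natCast_s15, mul_sum]
            refine sum_congr rfl fun r _ => ?_
            rw [show d + j + 1 + r = d + (j + r + 1) by omega,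
              show ((d + j + 1 : ℕ) : ℤ) - e = d - e + (j + 1) by push_cast; ring,
              show m - ((j + 1 : ℕ) : ℤ) - r = m - ((j + r : ℕ) + 1) by push_cast; ring]
            simp only [g]
            ring
      _ = ∑ c ∈ range (T + 1), ∑ j ∈ range (c + 1), g j (c - j) := (sum_range_diag_flip _ _).symm
      _ = _ := sum_congr rfl fun c _ => by
            have diag_term : ∀ j ∈ range (c + 1), g j (c - j) =
                e.choose (j + 1) * Ring.multichoose ((d : ℤ) - e + (j + 1)) (c - j) *
                  (((T + 1 + d).choose (d + (c + 1)) : ℤ) * Cb b (m - (c + 1))) := fun j hj => by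
              simp only [g, Nat.add_sub_cancel' (Nat.lt_succ_iff.1 (mem_range.1 hj))]
            rw [sum_congr rfl diag_term, ← sum_mul, sum_choose_succ_mul_multichoose, sub_add_cancel,
              Ring.multichoose_natCast]
            ring
  rw [positive, negative, sum_range_succ' _ (T + 1), sum_range_succ' _ (T + 1),
    add_sub_right_comm, ← sum_sub_distrib]
  congr 1
  · refine sum_congr rfl fun c _ => ?_
    push_cast
    ring
  · simp

theorem stmt_15_general (t a s n : ℕ) (ht : 1 ≤ t) (hs : n + 3 ≤ s) :
    Fb t (a : ℤ) s 0 (n : ℤ) + Fb (t - 1) (a : ℤ) s 0 ((n : ℤ) - 1) =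
      Fb t ((a : ℤ) + t) s (s - n - 3) (n : ℤ) := by
  obtain ⟨T, rfl⟩ : ∃ T, t = T + 1 := ⟨t - 1, by omega⟩
  set d := s - n - 3
  rw [Nat.add_sub_cancel, Fb_eq_sum (T + 1) a s 0 d n (by omega),
    Fb_eq_sum T a s 0 (d + 1) (n - 1) (by push_cast; omega), ← Nat.cast_add,
    Fb_eq_sum (T + 1) (a + (T + 1)) s d d n (by omega)]
  have rhs : ∑ j ∈ range (T + 1 + 1), ((T + 1 + d).choose (d + j) : ℤ) *
      Ring.multichoose ((d : ℤ) - d) j * Cb ((a + (T + 1) : ℕ) : ℤ) (n - j) =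
      ∑ k ∈ range (T + 1 + 1), ((T + 1 + d).choose d : ℤ) * ((T + 1).choose k * Cb a (n - k)) := by
    rw [sum_range_succ', sum_eq_zero fun j _ => by
      rw [sub_self, Ring.multichoose_zero_succ, mul_zero, zero_mul], zero_add, Nat.cast_add,
      Cb_add_natCast, mul_sum]
    simp
  rw [rhs, sum_range_succ' _ (T + 1), sum_range_succ' _ (T + 1), add_right_comm,
    ← sum_add_distrib]
  congr 1
  · refine sum_congr rfl fun c _ => ?_
    have coeff : ((T + 1 + d).choose (d + (c + 1)) : ℤ) *
        (d.multichoose (c + 1) + (d + 1).multichoose c) =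
        (T + 1 + d).choose d * (T + 1).choose (c + 1) := by
      exact_mod_cast
        Nat.multichoose_succ_succ d c ▸ Nat.choose_add_mul_multichoose_succ (T + 1) d (c + 1)
    rw [show T + (d + 1) = T + 1 + d by omega, show d + 1 + c = d + (c + 1) by omega,
      show (n : ℤ) - 1 - c = n - ((c + 1 : ℕ) : ℤ) by push_cast; ring]
    simp only [Nat.cast_zero, sub_zero, Ring.multichoose_natCast]
    linear_combination Cb a (n - ((c + 1 : ℕ) : ℤ)) * coeff
  · simp

/-- **Property 2.** `F_t(a,s,0,n) + F_{t−1}(a,s,0,n−1) = F_t(a+t,s,s−n−3,n)`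
for `t ≥ 1`, `n ≥ 1` and `s ≥ n+3`. -/
theorem stmt_15 (t a s n : ℕ) (ht : 1 ≤ t) (hn : 1 ≤ n) (hs : n + 3 ≤ s) :
    Fb t (a : ℤ) s 0 (n : ℤ) + Fb (t - 1) (a : ℤ) s 0 ((n : ℤ) - 1) =
      Fb t ((a : ℤ) + t) s (s - n - 3) (n : ℤ) :=
  stmt_15_general t a s n ht hs

end
end
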